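/- arXiv:math/0210426 — 2 statements merged into one kernel-verified Lean document; each statement's English description precedes it below -/
import Mathlib

section
/- Let S be a finite set, ξ, η : S → ℤ, and π a probability measure on S with π(ω) > 0 for all ω ∈ S. Assume that the three functions ξ, η, and the constant function 1 on S are linearly independent over ℝ. Define G(θ,τ) := log Σ_{ω∈S} e^{θξ(ω)+τη(ω)} π(ω), π_{θ,τ}(ω) := π(ω) exp(θξ(ω)+τη(ω)−G(θ,τ)), u(θ,τ) := Σ_{ω∈S} ξ(ω) π_{θ,τ}(ω), and v(θ,τ) := Σ_{ω∈S} η(ω) π_{θ,τ}(ω). Then the map ℝ² → ℝ², (θ,τ) ↦ (u(θ,τ), v(θ,τ)), is injective. -/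
open scoped BigOperators

/-- The Gibbs free energy `G(θ,τ) = log Σ_ω e^{θξ(ω)+τη(ω)} π(ω)`. -/
noncomputable def freeEnergy {S : Type*} [Fintype S]
    (π : S → ℝ) (ξ η : S → ℤ) (p : ℝ × ℝ) : ℝ :=
  Real.log (∑ ω : S, Real.exp (p.1 * (ξ ω : ℝ) + p.2 * (η ω : ℝ)) * π ω)

/-- The single-site Gibbs measure `π_{θ,τ}(ω) = π(ω) exp(θξ(ω)+τη(ω)−G(θ,τ))`. -/
noncomputable def gibbsMeasure {S : Type*} [Fintype S]
    (π : S → ℝ) (ξ η : S → ℤ) (θ τ : ℝ) (ω : S) : ℝ :=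
  π ω * Real.exp (θ * (ξ ω : ℝ) + τ * (η ω : ℝ) - freeEnergy π ξ η (θ, τ))

lemma aux_mul_log_nonneg {x y : ℝ} (hx : 0 < x) (hy : 0 < y) :
    0 ≤ (x - y) * (Real.log x - Real.log y) := by
  rcases lt_trichotomy x y with h | h | h
  · have := Real.log_lt_log hx h; nlinarith
  · simp [h]
  · have := Real.log_lt_log hy h; nlinarith

lemma aux_mul_log_eq_zero {x y : ℝ} (hx : 0 < x) (hy : 0 < y)
    (h : (x - y) * (Real.log x - Real.log y) = 0) : x = y := by
  rcases lt_trichotomy x y with h' | h' | h'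
  · have := Real.log_lt_log hx h'; nlinarith
  · exact h'
  · have := Real.log_lt_log hy h'; nlinarith

/-- The Gibbs measure is positive. -/
lemma gibbsMeasure_pos {S : Type*} [Fintype S]
    (π : S → ℝ) (ξ η : S → ℤ) (hπ0 : ∀ ω : S, 0 < π ω) (θ τ : ℝ) (ω : S) :
    0 < gibbsMeasure π ξ η θ τ ω :=
  mul_pos (hπ0 ω) (Real.exp_pos _)

/-- The Gibbs measure sums to 1. -/
lemma gibbsMeasure_sum_one {S : Type*} [Fintype S] [Nonempty S]
    (π : S → ℝ) (ξ η : S → ℤ) (hπ0 : ∀ ω : S, 0 < π ω) (θ τ : ℝ) :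
    ∑ ω : S, gibbsMeasure π ξ η θ τ ω = 1 := by
  have hZ : 0 < ∑ ω : S, Real.exp (θ * (ξ ω : ℝ) + τ * (η ω : ℝ)) * π ω :=
    Finset.sum_pos (fun ω _ => mul_pos (Real.exp_pos _) (hπ0 ω)) Finset.univ_nonempty
  have hG : Real.exp (freeEnergy π ξ η (θ, τ))
      = ∑ ω : S, Real.exp (θ * (ξ ω : ℝ) + τ * (η ω : ℝ)) * π ω := Real.exp_log hZ
  have h1 : ∀ ω : S, gibbsMeasure π ξ η θ τ ω
      = Real.exp (θ * (ξ ω : ℝ) + τ * (η ω : ℝ)) * π ω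
        / Real.exp (freeEnergy π ξ η (θ, τ)) := by
    intro ω
    rw [gibbsMeasure, Real.exp_sub]
    ring
  rw [Finset.sum_congr rfl (fun ω _ => h1 ω), ← Finset.sum_div, ← hG,
    div_self (Real.exp_pos _).ne']

/-- injectivity of the map `(θ,τ) ↦ (u(θ,τ), v(θ,τ))`, where
`u`, `v` are the expectations of the conserved quantities `ξ`, `η` under
the Gibbs measures `π_{θ,τ}`. -/
theorem gibbs_expectation_map_injective {S : Type*} [Fintype S]
    (ξ η : S → ℤ) (π : S → ℝ)
    (hπ0 : ∀ ω : S, 0 < π ω) (hπ1 : ∑ ω : S, π ω = 1)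
    (hli : LinearIndependent ℝ
      ![fun ω : S => (ξ ω : ℝ), fun ω : S => (η ω : ℝ), fun _ : S => (1 : ℝ)]) :
    Function.Injective (fun p : ℝ × ℝ =>
      ((∑ ω : S, (ξ ω : ℝ) * gibbsMeasure π ξ η p.1 p.2 ω),
       (∑ ω : S, (η ω : ℝ) * gibbsMeasure π ξ η p.1 p.2 ω))) := by
  have hS : Nonempty S := by
    by_contra hS
    rw [not_nonempty_iff] at hS
    simp at hπ1
  intro p q h
  simp only [Prod.mk.injEq] at h
  obtain ⟨hu, hv⟩ := h
  set μ : S → ℝ := fun ω => gibbsMeasure π ξ η p.1 p.2 ω with hμdef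
  set ν : S → ℝ := fun ω => gibbsMeasure π ξ η q.1 q.2 ω with hνdef
  have hμpos : ∀ ω, 0 < μ ω := fun ω => gibbsMeasure_pos π ξ η hπ0 _ _ ω
  have hνpos : ∀ ω, 0 < ν ω := fun ω => gibbsMeasure_pos π ξ η hπ0 _ _ ω
  have hμ1 : ∑ ω : S, μ ω = 1 := gibbsMeasure_sum_one π ξ η hπ0 p.1 p.2
  have hν1 : ∑ ω : S, ν ω = 1 := gibbsMeasure_sum_one π ξ η hπ0 q.1 q.2
  set Gp := freeEnergy π ξ η (p.1, p.2) with hGp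
  set Gq := freeEnergy π ξ η (q.1, q.2) with hGq
  have hlogμ : ∀ ω, Real.log (μ ω)
      = Real.log (π ω) + (p.1 * (ξ ω : ℝ) + p.2 * (η ω : ℝ) - Gp) := by
    intro ω
    rw [hμdef]
    simp only [gibbsMeasure]
    rw [Real.log_mul (hπ0 ω).ne' (Real.exp_pos _).ne', Real.log_exp]
  have hlogν : ∀ ω, Real.log (ν ω)
      = Real.log (π ω) + (q.1 * (ξ ω : ℝ) + q.2 * (η ω : ℝ) - Gq) := by
    intro ω
    rw [hνdef]
    simp only [gibbsMeasure]
    rw [Real.log_mul (hπ0 ω).ne' (Real.exp_pos _).ne', Real.log_exp]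
  have hexpand : ∀ ω, (μ ω - ν ω) * (Real.log (μ ω) - Real.log (ν ω))
      = (p.1 - q.1) * ((ξ ω : ℝ) * μ ω - (ξ ω : ℝ) * ν ω)
        + (p.2 - q.2) * ((η ω : ℝ) * μ ω - (η ω : ℝ) * ν ω)
        + (Gq - Gp) * (μ ω - ν ω) := by
    intro ω
    rw [hlogμ ω, hlogν ω]
    ring
  have hkey : ∑ ω : S, (μ ω - ν ω) * (Real.log (μ ω) - Real.log (ν ω)) = 0 := by
    rw [Finset.sum_congr rfl (fun ω _ => hexpand ω)]
    rw [Finset.sum_add_distrib, Finset.sum_add_distrib,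
      ← Finset.mul_sum, ← Finset.mul_sum, ← Finset.mul_sum,
      Finset.sum_sub_distrib, Finset.sum_sub_distrib, Finset.sum_sub_distrib,
      hu, hv, hμ1, hν1]
    ring
  have hzero : ∀ ω ∈ Finset.univ,
      (μ ω - ν ω) * (Real.log (μ ω) - Real.log (ν ω)) = 0 :=
    (Finset.sum_eq_zero_iff_of_nonneg
      (fun ω _ => aux_mul_log_nonneg (hμpos ω) (hνpos ω))).mp hkey
  have hpoint : ∀ ω : S, p.1 * (ξ ω : ℝ) + p.2 * (η ω : ℝ) - Gp
      = q.1 * (ξ ω : ℝ) + q.2 * (η ω : ℝ) - Gq := by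
    intro ω
    have hμν : μ ω = ν ω :=
      aux_mul_log_eq_zero (hμpos ω) (hνpos ω) (hzero ω (Finset.mem_univ ω))
    have := hlogμ ω
    rw [hμν, hlogν ω] at this
    linarith
  rw [Fintype.linearIndependent_iff] at hli
  have hcoef := hli ![p.1 - q.1, p.2 - q.2, Gq - Gp] (by
    funext ω
    simp only [Fin.sum_univ_three, Matrix.cons_val_zero, Matrix.cons_val_one,
      Matrix.head_cons, Matrix.cons_val_two, Matrix.tail_cons, Pi.add_apply,
      Pi.smul_apply, smul_eq_mul, Pi.zero_apply]
    have := hpoint ω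
    nlinarith [hpoint ω])
  have h1 := hcoef 0
  have h2 := hcoef 1
  simp only [Matrix.cons_val_zero, Matrix.cons_val_one, Matrix.head_cons] at h1 h2
  exact Prod.ext (by linarith) (by linarith)
end

section
/- (The thermodynamic entropy is a Lax entropy.) Assume S is a finite set, ξ, η : S → ℤ, r : S×S×S×S → [0,∞) satisfies condition (A), π is a probability measure on S with π(ω) > 0 for all ω satisfying condition (C), condition (D) holds, and ξ, η, 1 are linearly independent over ℝ. Let V ⊆ ℝ² be an open set containing the range of ∇G, and suppose Φ̃, Ψ̃ : V → ℝ are differentiable functions with Φ̃(∇G(θ,τ)) = Φ(θ,τ) and Ψ̃(∇G(θ,τ)) = Ψ(θ,τ) for all (θ,τ) ∈ ℝ². Let S*(u,v) := sup_{(θ,τ)∈ℝ²} ( uθ + vτ − G(θ,τ) ) and suppose S* is twice differentiable on the range of ∇G. Then at every point (u,v) in the range of ∇G the Lax-entropy equation holds: S*''_{uu} ∂_v Φ̃ + S*''_{uv} ∂_v Ψ̃ = S*''_{uv} ∂_u Φ̃ + S*''_{vv} ∂_u Ψ̃; i.e., the equilibrium thermodynamic entropy S*(u,v) is a Lax entropy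 of the hyperbolic system ∂_t u + ∂_x Φ̃(u,v) = 0, ∂_t v + ∂_x Ψ̃(u,v) = 0. -/
open scoped BigOperators

/-- The macroscopic flux of the conserved quantity `g`. -/
noncomputable def macroFlux {S : Type*} [Fintype S]
    (r : S → S → S → S → ℝ) (π : S → ℝ) (ξ η g : S → ℤ) (p : ℝ × ℝ) : ℝ :=
  ∑ ω₁ : S, ∑ ω₂ : S,
    (∑ ω₁' : S, ∑ ω₂' : S, r ω₁ ω₂ ω₁' ω₂' * ((g ω₂' : ℝ) - (g ω₂ : ℝ))) *
      gibbsMeasure π ξ η p.1 p.2 ω₁ * gibbsMeasure π ξ η p.1 p.2 ω₂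

/-- The map `(θ,τ) ↦ (u,v) = ∇G(θ,τ)`: the densities of the conserved
quantities, i.e. the expectations of `ξ`, `η` under `π_{θ,τ}`. -/
noncomputable def densityMap {S : Type*} [Fintype S]
    (π : S → ℝ) (ξ η : S → ℤ) (p : ℝ × ℝ) : ℝ × ℝ :=
  ((∑ ω : S, (ξ ω : ℝ) * gibbsMeasure π ξ η p.1 p.2 ω),
   (∑ ω : S, (η ω : ℝ) * gibbsMeasure π ξ η p.1 p.2 ω))

/-- The equilibrium thermodynamic entropy: the convex conjugate (Legendre
transform) `S*(u,v) = sup_{θ,τ} (uθ + vτ − G(θ,τ))`. -/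
noncomputable def thermoEntropy {S : Type*} [Fintype S]
    (π : S → ℝ) (ξ η : S → ℤ) (w : ℝ × ℝ) : ℝ :=
  ⨆ p : ℝ × ℝ, (w.1 * p.1 + w.2 * p.2 - freeEnergy π ξ η p)

set_option linter.unusedSectionVars false
set_option maxHeartbeats 1000000

namespace LaxAux
variable {S : Type*} [Fintype S]

variable {S : Type*} [Fintype S]

noncomputable def Zf (π : S → ℝ) (ξ η : S → ℤ) (p : ℝ × ℝ) : ℝ :=
  ∑ ω : S, Real.exp (p.1 * (ξ ω : ℝ) + p.2 * (η ω : ℝ)) * π ω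


lemma Zf_pos [Nonempty S] (π : S → ℝ) (ξ η : S → ℤ) (hπ0 : ∀ ω, 0 < π ω) (p : ℝ × ℝ) :
    0 < Zf π ξ η p :=
  Finset.sum_pos (fun ω _ => mul_pos (Real.exp_pos _) (hπ0 ω)) Finset.univ_nonempty

lemma gibbs_eq [Nonempty S] (π : S → ℝ) (ξ η : S → ℤ) (hπ0 : ∀ ω, 0 < π ω) (p : ℝ × ℝ) (ω : S) :
    gibbsMeasure π ξ η p.1 p.2 ω
      = Real.exp (p.1 * (ξ ω : ℝ) + p.2 * (η ω : ℝ)) * π ω / Zf π ξ η p := by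
  have hz := Zf_pos π ξ η hπ0 p
  have hfe : freeEnergy π ξ η (p.1, p.2) = Real.log (Zf π ξ η p) := rfl
  rw [gibbsMeasure, hfe, Real.exp_sub, Real.exp_log hz]
  ring

lemma gibbs_pos [Nonempty S] (π : S → ℝ) (ξ η : S → ℤ) (hπ0 : ∀ ω, 0 < π ω) (p : ℝ × ℝ) (ω : S) :
    0 < gibbsMeasure π ξ η p.1 p.2 ω := by
  rw [gibbs_eq π ξ η hπ0]
  exact div_pos (mul_pos (Real.exp_pos _) (hπ0 ω)) (Zf_pos π ξ η hπ0 p)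

lemma gibbs_sum [Nonempty S] (π : S → ℝ) (ξ η : S → ℤ) (hπ0 : ∀ ω, 0 < π ω) (p : ℝ × ℝ) :
    ∑ ω : S, gibbsMeasure π ξ η p.1 p.2 ω = 1 := by
  have hz := (Zf_pos π ξ η hπ0 p).ne'
  simp only [gibbs_eq π ξ η hπ0]
  rw [← Finset.sum_div]
  exact div_self (by simpa [Zf] using hz)

noncomputable def lin (ξ η : S → ℤ) (ω : S) : (ℝ × ℝ) →L[ℝ] ℝ :=
  (ξ ω : ℝ) • ContinuousLinearMap.fst ℝ ℝ ℝ + (η ω : ℝ) • ContinuousLinearMap.snd ℝ ℝ ℝ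

@[simp] lemma lin_apply (ξ η : S → ℤ) (ω : S) (d : ℝ × ℝ) :
    lin ξ η ω d = d.1 * (ξ ω : ℝ) + d.2 * (η ω : ℝ) := by
  simp [lin, mul_comm]

lemma hasFDerivAt_lin (ξ η : S → ℤ) (ω : S) (p : ℝ × ℝ) :
    HasFDerivAt (fun q : ℝ × ℝ => q.1 * (ξ ω : ℝ) + q.2 * (η ω : ℝ)) (lin ξ η ω) p := by
  have := (lin ξ η ω).hasFDerivAt (x := p)
  convert this using 2
  simp [lin, mul_comm]

noncomputable def DZ (π : S → ℝ) (ξ η : S → ℤ) (p : ℝ × ℝ) : (ℝ × ℝ) →L[ℝ] ℝ :=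
  ∑ ω : S, (Real.exp (p.1 * (ξ ω : ℝ) + p.2 * (η ω : ℝ)) * π ω) • lin ξ η ω

lemma hasFDerivAt_Zf (π : S → ℝ) (ξ η : S → ℤ) (p : ℝ × ℝ) :
    HasFDerivAt (Zf π ξ η) (DZ π ξ η p) p := by
  apply HasFDerivAt.fun_sum
  intro ω _
  have := ((hasFDerivAt_lin ξ η ω p).exp).mul_const (π ω)
  rw [smul_smul, mul_comm (π ω)] at this
  exact this

lemma hasFDerivAt_freeEnergy [Nonempty S] (π : S → ℝ) (ξ η : S → ℤ)
    (hπ0 : ∀ ω, 0 < π ω) (p : ℝ × ℝ) :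
    HasFDerivAt (freeEnergy π ξ η) ((Zf π ξ η p)⁻¹ • DZ π ξ η p) p := by
  have hz : Zf π ξ η p ≠ 0 := (Finset.sum_pos (fun ω _ => mul_pos (Real.exp_pos _) (hπ0 ω))
    Finset.univ_nonempty).ne'
  exact (hasFDerivAt_Zf π ξ η p).log hz

noncomputable def Dgibbs (π : S → ℝ) (ξ η : S → ℤ) (p : ℝ × ℝ) (ω : S) : (ℝ × ℝ) →L[ℝ] ℝ :=
  gibbsMeasure π ξ η p.1 p.2 ω • (lin ξ η ω - (Zf π ξ η p)⁻¹ • DZ π ξ η p)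

lemma hasFDerivAt_gibbs [Nonempty S] (π : S → ℝ) (ξ η : S → ℤ)
    (hπ0 : ∀ ω, 0 < π ω) (p : ℝ × ℝ) (ω : S) :
    HasFDerivAt (fun q : ℝ × ℝ => gibbsMeasure π ξ η q.1 q.2 ω) (Dgibbs π ξ η p ω) p := by
  have h1 : HasFDerivAt (fun q : ℝ × ℝ =>
      Real.exp (q.1 * (ξ ω : ℝ) + q.2 * (η ω : ℝ) - freeEnergy π ξ η q))
      (Real.exp (p.1 * (ξ ω : ℝ) + p.2 * (η ω : ℝ) - freeEnergy π ξ η p) •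
        (lin ξ η ω - (Zf π ξ η p)⁻¹ • DZ π ξ η p)) p :=
    ((hasFDerivAt_lin ξ η ω p).sub (hasFDerivAt_freeEnergy π ξ η hπ0 p)).exp
  have h2 := h1.const_mul (π ω)
  have : HasFDerivAt (fun q : ℝ × ℝ => gibbsMeasure π ξ η q.1 q.2 ω)
      (π ω • Real.exp (p.1 * (ξ ω : ℝ) + p.2 * (η ω : ℝ) - freeEnergy π ξ η p) •
        (lin ξ η ω - (Zf π ξ η p)⁻¹ • DZ π ξ η p)) p := h2
  rw [smul_smul] at this
  exact this


/-- mean of the direction functional `χ_d` under the Gibbs measure -/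
noncomputable def meanChi (π : S → ℝ) (ξ η : S → ℤ) (p d : ℝ × ℝ) : ℝ :=
  ∑ ω : S, gibbsMeasure π ξ η p.1 p.2 ω * (d.1 * (ξ ω : ℝ) + d.2 * (η ω : ℝ))

lemma Dgibbs_apply [Nonempty S] (π : S → ℝ) (ξ η : S → ℤ) (hπ0 : ∀ ω, 0 < π ω)
    (p : ℝ × ℝ) (ω : S) (d : ℝ × ℝ) :
    Dgibbs π ξ η p ω d
      = gibbsMeasure π ξ η p.1 p.2 ω *
        ((d.1 * (ξ ω : ℝ) + d.2 * (η ω : ℝ)) - meanChi π ξ η p d) := by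
  have hz : (0:ℝ) < Zf π ξ η p :=
    Finset.sum_pos (fun ω _ => mul_pos (Real.exp_pos _) (hπ0 ω)) Finset.univ_nonempty
  have hDZ : (Zf π ξ η p)⁻¹ * DZ π ξ η p d = meanChi π ξ η p d := by
    rw [DZ, meanChi]
    simp only [ContinuousLinearMap.coe_sum', Finset.sum_apply, ContinuousLinearMap.coe_smul',
      Pi.smul_apply, lin_apply, smul_eq_mul]
    rw [Finset.mul_sum]
    apply Finset.sum_congr rfl
    intro ω' _
    rw [gibbs_eq π ξ η hπ0]
    field_simp
  simp only [Dgibbs, ContinuousLinearMap.coe_smul', Pi.smul_apply, ContinuousLinearMap.coe_sub',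
    Pi.sub_apply, lin_apply, smul_eq_mul]
  rw [← hDZ]
noncomputable def Nmap (π : S → ℝ) (ξ η : S → ℤ) (p : ℝ × ℝ) : (ℝ × ℝ) →L[ℝ] ℝ × ℝ :=
  (∑ ω : S, (ξ ω : ℝ) • Dgibbs π ξ η p ω).prod (∑ ω : S, (η ω : ℝ) • Dgibbs π ξ η p ω)

lemma hasFDerivAt_densityMap [Nonempty S] (π : S → ℝ) (ξ η : S → ℤ)
    (hπ0 : ∀ ω, 0 < π ω) (p : ℝ × ℝ) :
    HasFDerivAt (densityMap π ξ η) (Nmap π ξ η p) p := by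
  apply HasFDerivAt.prodMk <;>
    · apply HasFDerivAt.fun_sum
      intro ω _
      exact (hasFDerivAt_gibbs π ξ η hπ0 p ω).const_mul _

def dot (a b : ℝ × ℝ) : ℝ := a.1 * b.1 + a.2 * b.2

lemma dotN [Nonempty S] (π : S → ℝ) (ξ η : S → ℤ) (hπ0 : ∀ ω, 0 < π ω) (p d e : ℝ × ℝ) :
    dot (Nmap π ξ η p d) e
      = (∑ ω : S, gibbsMeasure π ξ η p.1 p.2 ω * (d.1 * (ξ ω : ℝ) + d.2 * (η ω : ℝ))
            * (e.1 * (ξ ω : ℝ) + e.2 * (η ω : ℝ)))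
        - meanChi π ξ η p d * meanChi π ξ η p e := by
  have h1 : dot (Nmap π ξ η p d) e
      = ∑ ω : S, Dgibbs π ξ η p ω d * (e.1 * (ξ ω : ℝ) + e.2 * (η ω : ℝ)) := by
    simp only [dot, Nmap, ContinuousLinearMap.prod_apply, ContinuousLinearMap.coe_sum',
      Finset.sum_apply, ContinuousLinearMap.coe_smul', Pi.smul_apply, smul_eq_mul]
    rw [Finset.sum_mul, Finset.sum_mul, ← Finset.sum_add_distrib]
    exact Finset.sum_congr rfl fun ω _ => by ring
  rw [h1]
  have h2 : ∀ ω : S, Dgibbs π ξ η p ω d * (e.1 * (ξ ω : ℝ) + e.2 * (η ω : ℝ))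
      = gibbsMeasure π ξ η p.1 p.2 ω * (d.1 * (ξ ω : ℝ) + d.2 * (η ω : ℝ))
          * (e.1 * (ξ ω : ℝ) + e.2 * (η ω : ℝ))
        - (gibbsMeasure π ξ η p.1 p.2 ω * (e.1 * (ξ ω : ℝ) + e.2 * (η ω : ℝ)))
          * meanChi π ξ η p d := by
    intro ω
    rw [Dgibbs_apply π ξ η hπ0]
    ring
  rw [Finset.sum_congr rfl fun ω _ => h2 ω, Finset.sum_sub_distrib, ← Finset.sum_mul]
  rw [show (∑ ω : S, gibbsMeasure π ξ η p.1 p.2 ω * (e.1 * (ξ ω : ℝ) + e.2 * (η ω : ℝ)))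
    = meanChi π ξ η p e from rfl]
  ring

lemma dotN_symm [Nonempty S] (π : S → ℝ) (ξ η : S → ℤ) (hπ0 : ∀ ω, 0 < π ω) (p d e : ℝ × ℝ) :
    dot (Nmap π ξ η p d) e = dot (Nmap π ξ η p e) d := by
  rw [dotN π ξ η hπ0, dotN π ξ η hπ0]
  have h : (∑ ω : S, gibbsMeasure π ξ η p.1 p.2 ω * (d.1 * (ξ ω : ℝ) + d.2 * (η ω : ℝ))
        * (e.1 * (ξ ω : ℝ) + e.2 * (η ω : ℝ)))
      = ∑ ω : S, gibbsMeasure π ξ η p.1 p.2 ω * (e.1 * (ξ ω : ℝ) + e.2 * (η ω : ℝ))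
        * (d.1 * (ξ ω : ℝ) + d.2 * (η ω : ℝ)) := Finset.sum_congr rfl fun ω _ => by ring
  rw [h]
  ring

lemma dotN_self [Nonempty S] (π : S → ℝ) (ξ η : S → ℤ) (hπ0 : ∀ ω, 0 < π ω) (p d : ℝ × ℝ) :
    dot (Nmap π ξ η p d) d
      = ∑ ω : S, gibbsMeasure π ξ η p.1 p.2 ω
          * ((d.1 * (ξ ω : ℝ) + d.2 * (η ω : ℝ)) - meanChi π ξ η p d)^2 := by
  rw [dotN π ξ η hπ0]
  have h2 : ∀ ω : S, gibbsMeasure π ξ η p.1 p.2 ω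
        * ((d.1 * (ξ ω : ℝ) + d.2 * (η ω : ℝ)) - meanChi π ξ η p d)^2
      = gibbsMeasure π ξ η p.1 p.2 ω * (d.1 * (ξ ω : ℝ) + d.2 * (η ω : ℝ))
          * (d.1 * (ξ ω : ℝ) + d.2 * (η ω : ℝ))
        - 2 * meanChi π ξ η p d
            * (gibbsMeasure π ξ η p.1 p.2 ω * (d.1 * (ξ ω : ℝ) + d.2 * (η ω : ℝ)))
        + meanChi π ξ η p d ^ 2 * gibbsMeasure π ξ η p.1 p.2 ω := by
    intro ω; ring
  rw [Finset.sum_congr rfl fun ω _ => h2 ω]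
  rw [Finset.sum_add_distrib, Finset.sum_sub_distrib, ← Finset.mul_sum, ← Finset.mul_sum,
    gibbs_sum π ξ η hπ0]
  rw [show (∑ ω : S, gibbsMeasure π ξ η p.1 p.2 ω * (d.1 * (ξ ω : ℝ) + d.2 * (η ω : ℝ)))
    = meanChi π ξ η p d from rfl]
  ring

lemma dotN_self_nonneg [Nonempty S] (π : S → ℝ) (ξ η : S → ℤ) (hπ0 : ∀ ω, 0 < π ω)
    (p d : ℝ × ℝ) : 0 ≤ dot (Nmap π ξ η p d) d := by
  rw [dotN_self π ξ η hπ0]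
  exact Finset.sum_nonneg fun ω _ => mul_nonneg (gibbs_pos π ξ η hπ0 p ω).le (sq_nonneg _)
lemma nonempty_of_li {S : Type*} (ξ η : S → ℤ)
    (hli : LinearIndependent ℝ
      ![fun ω : S => (ξ ω : ℝ), fun ω : S => (η ω : ℝ), fun _ : S => (1 : ℝ)]) :
    Nonempty S := by
  by_contra h
  have : IsEmpty S := not_nonempty_iff.mp h
  have : Subsingleton (S → ℝ) := ⟨fun f g => funext fun ω => (IsEmpty.false ω).elim⟩
  exact hli.ne_zero 2 (Subsingleton.elim _ _)

lemma Nmap_ker [Nonempty S] (π : S → ℝ) (ξ η : S → ℤ) (hπ0 : ∀ ω, 0 < π ω)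
    (hli : LinearIndependent ℝ
      ![fun ω : S => (ξ ω : ℝ), fun ω : S => (η ω : ℝ), fun _ : S => (1 : ℝ)])
    (p d : ℝ × ℝ) (hd : Nmap π ξ η p d = 0) : d = 0 := by
  have h0 : dot (Nmap π ξ η p d) d = 0 := by rw [hd]; simp [dot]
  rw [dotN_self π ξ η hπ0] at h0
  have hall : ∀ ω : S,
      d.1 * (ξ ω : ℝ) + d.2 * (η ω : ℝ) - meanChi π ξ η p d = 0 := by
    intro ω
    have hterm := (Finset.sum_eq_zero_iff_of_nonneg
      (fun ω _ => mul_nonneg (gibbs_pos π ξ η hπ0 p ω).le (sq_nonneg _))).mp h0 ω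
      (Finset.mem_univ ω)
    rcases mul_eq_zero.mp hterm with h | h
    · exact absurd h (gibbs_pos π ξ η hπ0 p ω).ne'
    · exact pow_eq_zero_iff two_ne_zero |>.mp h
  have hz := Fintype.linearIndependent_iff.mp hli ![d.1, d.2, -(meanChi π ξ η p d)] ?_
  · have h1 := hz 0
    have h2 := hz 1
    simp only [Matrix.cons_val_zero, Matrix.cons_val_one, Matrix.head_cons] at h1 h2
    exact Prod.ext h1 h2
  · funext ω
    simp only [Fin.sum_univ_three, Matrix.cons_val_zero, Matrix.cons_val_one, Matrix.head_cons,
      Matrix.cons_val_two, Matrix.tail_cons, Pi.add_apply, Pi.smul_apply, smul_eq_mul,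
      Pi.zero_apply]
    have := hall ω
    linarith [hall ω]

lemma Nmap_surj [Nonempty S] (π : S → ℝ) (ξ η : S → ℤ) (hπ0 : ∀ ω, 0 < π ω)
    (hli : LinearIndependent ℝ
      ![fun ω : S => (ξ ω : ℝ), fun ω : S => (η ω : ℝ), fun _ : S => (1 : ℝ)])
    (p : ℝ × ℝ) : Function.Bijective (Nmap π ξ η p) := by
  have hinj : Function.Injective (Nmap π ξ η p) := by
    intro a b hab
    have h : Nmap π ξ η p (a - b) = 0 := by rw [map_sub, hab, sub_self]
    have := Nmap_ker π ξ η hπ0 hli p _ h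
    exact sub_eq_zero.mp this
  refine ⟨hinj, ?_⟩
  exact (LinearMap.injective_iff_surjective
    (f := ((Nmap π ξ η p) : (ℝ × ℝ) →ₗ[ℝ] ℝ × ℝ))).mp hinj

noncomputable def DM (r : S → S → S → S → ℝ) (π : S → ℝ) (ξ η g : S → ℤ)
    (p : ℝ × ℝ) : (ℝ × ℝ) →L[ℝ] ℝ :=
  ∑ a : S, ∑ b : S,
    (((∑ c : S, ∑ d : S, r a b c d * ((g d : ℝ) - (g b : ℝ))) * gibbsMeasure π ξ η p.1 p.2 a)
        • Dgibbs π ξ η p b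
      + gibbsMeasure π ξ η p.1 p.2 b •
        ((∑ c : S, ∑ d : S, r a b c d * ((g d : ℝ) - (g b : ℝ))) • Dgibbs π ξ η p a))

lemma hasFDerivAt_macroFlux [Nonempty S] (r : S → S → S → S → ℝ) (π : S → ℝ)
    (ξ η g : S → ℤ) (hπ0 : ∀ ω, 0 < π ω) (p : ℝ × ℝ) :
    HasFDerivAt (macroFlux r π ξ η g) (DM r π ξ η g p) p := by
  apply HasFDerivAt.fun_sum; intro a _
  apply HasFDerivAt.fun_sum; intro b _
  exact ((hasFDerivAt_gibbs π ξ η hπ0 p a).const_mul _).mul (hasFDerivAt_gibbs π ξ η hπ0 p b)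

lemma DM_apply [Nonempty S] (r : S → S → S → S → ℝ) (π : S → ℝ)
    (ξ η g : S → ℤ) (hπ0 : ∀ ω, 0 < π ω) (p d : ℝ × ℝ) :
    DM r π ξ η g p d
      = ∑ a : S, ∑ b : S,
          (∑ c : S, ∑ e : S, r a b c e * ((g e : ℝ) - (g b : ℝ)))
            * (gibbsMeasure π ξ η p.1 p.2 a * gibbsMeasure π ξ η p.1 p.2 b)
            * (((d.1 * (ξ a : ℝ) + d.2 * (η a : ℝ)) - meanChi π ξ η p d)
              + ((d.1 * (ξ b : ℝ) + d.2 * (η b : ℝ)) - meanChi π ξ η p d)) := by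
  rw [DM]
  simp only [ContinuousLinearMap.coe_sum', Finset.sum_apply, ContinuousLinearMap.add_apply,
    ContinuousLinearMap.coe_smul', Pi.smul_apply, smul_eq_mul]
  apply Finset.sum_congr rfl; intro a _
  apply Finset.sum_congr rfl; intro b _
  rw [Dgibbs_apply π ξ η hπ0, Dgibbs_apply π ξ η hπ0]
  ring

/-! ### The combinatorial core -/

noncomputable def Q (r : S → S → S → S → ℝ) (ρ : S → ℝ) (W : S → S → S → S → ℝ) : ℝ :=
  ∑ a : S, ∑ b : S, ∑ c : S, ∑ d : S, r a b c d * W a b c d * (ρ a * ρ b)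

lemma sum4_rev (F : S → S → S → S → ℝ) :
    (∑ a : S, ∑ b : S, ∑ c : S, ∑ d : S, F a b c d)
      = ∑ a : S, ∑ b : S, ∑ c : S, ∑ d : S, F d c b a := by
  have h1 : (∑ a : S, ∑ b : S, ∑ c : S, ∑ d : S, F a b c d)
      = ∑ x : S × S × S × S, F x.1 x.2.1 x.2.2.1 x.2.2.2 := by
    simp [Fintype.sum_prod_type]
  have h2 : (∑ a : S, ∑ b : S, ∑ c : S, ∑ d : S, F d c b a)
      = ∑ x : S × S × S × S, F x.2.2.2 x.2.2.1 x.2.1 x.1 := by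
    simp [Fintype.sum_prod_type]
  rw [h1, h2]
  exact Fintype.sum_bijective (fun x : S × S × S × S => (x.2.2.2, x.2.2.1, x.2.1, x.1))
    (Function.Involutive.bijective fun x => rfl) _ _ (fun x => rfl)

lemma Q_rev (r : S → S → S → S → ℝ) (ρ : S → ℝ)
    (hC' : ∀ a b c d, ρ a * ρ b * r a b c d = ρ d * ρ c * r d c b a)
    (W : S → S → S → S → ℝ) :
    Q r ρ W = Q r ρ (fun a b c d => W d c b a) := by
  have h1 : Q r ρ W = ∑ a : S, ∑ b : S, ∑ c : S, ∑ d : S,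
      (ρ d * ρ c * r d c b a) * W a b c d := by
    rw [Q]
    refine Finset.sum_congr rfl fun a _ => Finset.sum_congr rfl fun b _ =>
      Finset.sum_congr rfl fun c _ => Finset.sum_congr rfl fun d _ => ?_
    rw [← hC' a b c d]; ring
  rw [h1, sum4_rev (fun a b c d => (ρ d * ρ c * r d c b a) * W a b c d)]
  rw [Q]
  refine Finset.sum_congr rfl fun a _ => Finset.sum_congr rfl fun b _ =>
    Finset.sum_congr rfl fun c _ => Finset.sum_congr rfl fun d _ => ?_
  ring

lemma Q_congr (r : S → S → S → S → ℝ) (ρ : S → ℝ) (hr : ∀ a b c d, 0 ≤ r a b c d)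
    {W W' : S → S → S → S → ℝ}
    (h : ∀ a b c d, 0 < r a b c d → W a b c d = W' a b c d) :
    Q r ρ W = Q r ρ W' := by
  refine Finset.sum_congr rfl fun a _ => Finset.sum_congr rfl fun b _ =>
    Finset.sum_congr rfl fun c _ => Finset.sum_congr rfl fun d _ => ?_
  rcases (hr a b c d).lt_or_eq with hp | hp
  · rw [h a b c d hp]
  · rw [← hp]; ring

lemma Q_add (r : S → S → S → S → ℝ) (ρ : S → ℝ) (W W' : S → S → S → S → ℝ) :
    Q r ρ (fun a b c d => W a b c d + W' a b c d) = Q r ρ W + Q r ρ W' := by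
  simp only [Q, ← Finset.sum_add_distrib]
  refine Finset.sum_congr rfl fun a _ => Finset.sum_congr rfl fun b _ =>
    Finset.sum_congr rfl fun c _ => Finset.sum_congr rfl fun d _ => by ring

lemma Q_neg (r : S → S → S → S → ℝ) (ρ : S → ℝ) (W : S → S → S → S → ℝ) :
    Q r ρ (fun a b c d => -(W a b c d)) = -(Q r ρ W) := by
  simp only [Q, ← Finset.sum_neg_distrib]
  refine Finset.sum_congr rfl fun a _ => Finset.sum_congr rfl fun b _ =>
    Finset.sum_congr rfl fun c _ => Finset.sum_congr rfl fun d _ => by ring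
lemma Q_collapse (r : S → S → S → S → ℝ) (ρ : S → ℝ) (V : S → S → ℝ) :
    Q r ρ (fun a b _ _ => V a b)
      = ∑ a : S, ∑ b : S, (∑ c : S, ∑ d : S, r a b c d) * V a b * (ρ a * ρ b) := by
  refine Finset.sum_congr rfl fun a _ => Finset.sum_congr rfl fun b _ => ?_
  simp only [Finset.sum_mul]
  all_goals exact Finset.sum_congr rfl fun c _ => Finset.sum_congr rfl fun d _ => by ring

lemma core_QB [Nonempty S] (r : S → S → S → S → ℝ) (ρ f g : S → ℝ)
    (hD : ∀ a b e : S,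
      (∑ c : S, ∑ d : S, r a b c d) + (∑ c : S, ∑ d : S, r b e c d)
          + (∑ c : S, ∑ d : S, r e a c d)
        = (∑ c : S, ∑ d : S, r a e c d) + (∑ c : S, ∑ d : S, r e b c d)
          + (∑ c : S, ∑ d : S, r b a c d))
    (hmf : ∑ ω : S, f ω * ρ ω = 0) (hmg : ∑ ω : S, g ω * ρ ω = 0) :
    Q r ρ (fun a b _ _ => f b * g a - g b * f a) = 0 := by
  classical
  set R : S → S → ℝ := fun a b => ∑ c : S, ∑ d : S, r a b c d with hR
  obtain ⟨x0⟩ := ‹Nonempty S›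
  set α : S → ℝ := fun x => R x x0 - R x0 x with hα
  have hRab : ∀ a b, R a b - R b a = α a - α b := by
    intro a b
    have := hD a b x0
    simp only [hα, ← hR] at *
    linarith
  set T := Q r ρ (fun a b _ _ => f b * g a - g b * f a) with hT
  have h1 : T = ∑ a : S, ∑ b : S, R a b * (f b * g a - g b * f a) * (ρ a * ρ b) :=
    Q_collapse r ρ _
  have h2 : T = ∑ a : S, ∑ b : S, R b a * (f a * g b - g a * f b) * (ρ b * ρ a) := by
    rw [h1, Finset.sum_comm]
  have h3 : 2 * T
      = ∑ a : S, ∑ b : S, (α a - α b) * (f b * g a - g b * f a) * (ρ a * ρ b) := by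
    rw [two_mul]
    nth_rewrite 1 [h1]
    nth_rewrite 1 [h2]
    rw [← Finset.sum_add_distrib]
    refine Finset.sum_congr rfl fun a _ => ?_
    rw [← Finset.sum_add_distrib]
    refine Finset.sum_congr rfl fun b _ => ?_
    linear_combination ((f b * g a - g b * f a) * (ρ a * ρ b)) * hRab a b
  have h4 : ∑ a : S, ∑ b : S, (α a - α b) * (f b * g a - g b * f a) * (ρ a * ρ b) = 0 := by
    have inner : ∀ a : S, ∑ b : S, (α a - α b) * (f b * g a - g b * f a) * (ρ a * ρ b)
        = (α a * g a * ρ a) * (∑ b : S, f b * ρ b)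
          - (α a * f a * ρ a) * (∑ b : S, g b * ρ b)
          - (g a * ρ a) * (∑ b : S, α b * f b * ρ b)
          + (f a * ρ a) * (∑ b : S, α b * g b * ρ b) := by
      intro a
      rw [Finset.mul_sum, Finset.mul_sum, Finset.mul_sum, Finset.mul_sum,
        ← Finset.sum_sub_distrib, ← Finset.sum_sub_distrib, ← Finset.sum_add_distrib]
      exact Finset.sum_congr rfl fun b _ => by ring
    rw [Finset.sum_congr rfl fun a _ => inner a]
    simp only [hmf, hmg, mul_zero, zero_mul, sub_zero, zero_sub, add_zero, zero_add]
    have h5 : ∑ a : S, (-((g a * ρ a) * (∑ b : S, α b * f b * ρ b))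
        + (f a * ρ a) * (∑ b : S, α b * g b * ρ b)) = 0 := by
      rw [Finset.sum_add_distrib, Finset.sum_neg_distrib, ← Finset.sum_mul, ← Finset.sum_mul,
        hmf, hmg]
      ring
    rw [← h5]
    all_goals exact Finset.sum_congr rfl fun a _ => by ring
  have h5 : 2 * T = 0 := by rw [h3]; exact h4
  linarith

lemma core_symm [Nonempty S] (r : S → S → S → S → ℝ) (ρ f g : S → ℝ)
    (hr : ∀ a b c d, 0 ≤ r a b c d)
    (hC' : ∀ a b c d, ρ a * ρ b * r a b c d = ρ d * ρ c * r d c b a)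
    (hconsf : ∀ a b c d, 0 < r a b c d → f a + f b = f c + f d)
    (hconsg : ∀ a b c d, 0 < r a b c d → g a + g b = g c + g d)
    (hD : ∀ a b e : S,
      (∑ c : S, ∑ d : S, r a b c d) + (∑ c : S, ∑ d : S, r b e c d)
          + (∑ c : S, ∑ d : S, r e a c d)
        = (∑ c : S, ∑ d : S, r a e c d) + (∑ c : S, ∑ d : S, r e b c d)
          + (∑ c : S, ∑ d : S, r b a c d))
    (hmf : ∑ ω : S, f ω * ρ ω = 0) (hmg : ∑ ω : S, g ω * ρ ω = 0) :
    Q r ρ (fun a b _ d => (g d - g b) * (f a + f b))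
      = Q r ρ (fun a b _ d => (f d - f b) * (g a + g b)) := by
  -- the antisymmetric pairing
  set w : S → S → ℝ := fun x y => f x * g y - g x * f y with hw
  -- Q of w(a,d) vanishes by reversibility
  have hQad : Q r ρ (fun a _ _ d => w a d) = 0 := by
    have h := Q_rev r ρ hC' (fun a _ _ d => w a d)
    have h2 : Q r ρ (fun a b c d => w d a) = Q r ρ (fun a b c d => -(w a d)) := by
      refine Finset.sum_congr rfl fun a _ => Finset.sum_congr rfl fun b _ =>
        Finset.sum_congr rfl fun c _ => Finset.sum_congr rfl fun d _ => ?_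
      simp only [hw]; ring
    rw [h2, Q_neg] at h
    linarith
  -- Q of w(b,a) vanishes by condition D
  have hQba : Q r ρ (fun a b _ _ => w b a) = 0 := core_QB r ρ f g hD hmf hmg
  -- Q of w(c,a) vanishes by conservation
  have hQca : Q r ρ (fun a _ c _ => w c a) = 0 := by
    have hcg : Q r ρ (fun a b c d => w c a)
        = Q r ρ (fun a b c d => w b a + w a d) := by
      refine Q_congr r ρ hr fun a b c d hp => ?_
      have h1 := hconsf a b c d hp
      have h2 := hconsg a b c d hp
      simp only [hw]
      linear_combination f a * h2 - g a * h1
    rw [hcg, Q_add, hQba, hQad]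
    ring
  -- Q of w(b,d) vanishes by reversibility and the previous step
  have hQbd : Q r ρ (fun _ b _ d => w b d) = 0 := by
    have h := Q_rev r ρ hC' (fun _ b _ d => w b d)
    have h2 : Q r ρ (fun a b c d => w c a) = Q r ρ (fun a _ c _ => w c a) := rfl
    rw [← hQca, h]
  -- main computation
  have hmain : Q r ρ (fun a b _ d => (g d - g b) * (f a + f b))
      = Q r ρ (fun a b c d => (f d - f b) * (g a + g b) + (w c a + w b d)) := by
    refine Q_congr r ρ hr fun a b c d hp => ?_
    have h1 := hconsf a b c d hp
    have h2 := hconsg a b c d hp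
    simp only [hw]
    linear_combination g a * h1 - f a * h2
  rw [hmain, Q_add, Q_add, hQca, hQbd]
  ring

lemma invZ_DZ [Nonempty S] (π : S → ℝ) (ξ η : S → ℤ) (hπ0 : ∀ ω, 0 < π ω) (p d : ℝ × ℝ) :
    (Zf π ξ η p)⁻¹ * DZ π ξ η p d = meanChi π ξ η p d := by
  rw [DZ, meanChi]
  simp only [ContinuousLinearMap.coe_sum', Finset.sum_apply, ContinuousLinearMap.coe_smul',
    Pi.smul_apply, smul_eq_mul]
  rw [Finset.mul_sum]
  apply Finset.sum_congr rfl
  intro ω' _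
  rw [gibbs_eq π ξ η hπ0]
  have : lin ξ η ω' d = d.1 * (ξ ω' : ℝ) + d.2 * (η ω' : ℝ) := by
    simp [lin, mul_comm]
  rw [this]
  field_simp

lemma meanChi_dot [Nonempty S] (π : S → ℝ) (ξ η : S → ℤ) (p d : ℝ × ℝ) :
    meanChi π ξ η p d = dot (densityMap π ξ η p) d := by
  rw [meanChi, dot, densityMap]
  simp only
  rw [Finset.sum_mul, Finset.sum_mul, ← Finset.sum_add_distrib]
  exact Finset.sum_congr rfl fun ω _ => by ring

lemma contDiffAt_densityMap [Nonempty S] (π : S → ℝ) (ξ η : S → ℤ)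
    (hπ0 : ∀ ω, 0 < π ω) (p : ℝ × ℝ) :
    ContDiffAt ℝ 1 (densityMap π ξ η) p := by
  have hZ : ContDiff ℝ 1 (Zf π ξ η) := by
    apply ContDiff.sum
    intro ω _
    exact (((contDiff_fst.mul contDiff_const).add (contDiff_snd.mul contDiff_const)).exp).mul
      contDiff_const
  have hZne : Zf π ξ η p ≠ 0 := (Zf_pos π ξ η hπ0 p).ne'
  have hG : ContDiffAt ℝ 1 (freeEnergy π ξ η) p := by
    have : ContDiffAt ℝ 1 (fun q => Real.log (Zf π ξ η q)) p := (hZ.contDiffAt).log hZne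
    exact this
  have hgibbs : ∀ ω, ContDiffAt ℝ 1 (fun q : ℝ × ℝ => gibbsMeasure π ξ η q.1 q.2 ω) p := by
    intro ω
    exact contDiffAt_const.mul
      ((((contDiff_fst.mul contDiff_const).add (contDiff_snd.mul contDiff_const)).contDiffAt.sub
        hG).exp)
  apply ContDiffAt.prodMk <;>
    · apply ContDiffAt.sum
      intro ω _
      exact contDiffAt_const.mul (hgibbs ω)

lemma range_mem_nhds [Nonempty S] (π : S → ℝ) (ξ η : S → ℤ) (hπ0 : ∀ ω, 0 < π ω)
    (hli : LinearIndependent ℝ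
      ![fun ω : S => (ξ ω : ℝ), fun ω : S => (η ω : ℝ), fun _ : S => (1 : ℝ)])
    (p : ℝ × ℝ) :
    Set.range (densityMap π ξ η) ∈ nhds (densityMap π ξ η p) := by
  have hstrict : HasStrictFDerivAt (densityMap π ξ η) (Nmap π ξ η p) p := by
    have h := (contDiffAt_densityMap π ξ η hπ0 p).hasStrictFDerivAt one_ne_zero
    rwa [(hasFDerivAt_densityMap π ξ η hπ0 p).fderiv] at h
  set e := LinearEquiv.ofBijective ((Nmap π ξ η p) : (ℝ × ℝ) →ₗ[ℝ] ℝ × ℝ)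
    (Nmap_surj π ξ η hπ0 hli p) with he
  have hcoe : (↑(e.toContinuousLinearEquiv) : (ℝ × ℝ) →L[ℝ] ℝ × ℝ) = Nmap π ξ η p := by
    apply ContinuousLinearMap.ext
    intro x
    rfl
  have hmap := HasStrictFDerivAt.map_nhds_eq_of_equiv
    (f' := e.toContinuousLinearEquiv) (by rw [hcoe]; exact hstrict)
  rw [← hmap, Filter.mem_map]
  rw [Set.preimage_range]
  exact Filter.univ_mem
lemma hasFDerivAt_meanChi [Nonempty S] (π : S → ℝ) (ξ η : S → ℤ) (hπ0 : ∀ ω, 0 < π ω)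
    (p d : ℝ × ℝ) :
    HasFDerivAt (fun q : ℝ × ℝ => meanChi π ξ η q d)
      (∑ ω : S, (d.1 * (ξ ω : ℝ) + d.2 * (η ω : ℝ)) • Dgibbs π ξ η p ω) p := by
  apply HasFDerivAt.fun_sum
  intro ω _
  exact (hasFDerivAt_gibbs π ξ η hπ0 p ω).mul_const _

lemma meanChi_deriv_value [Nonempty S] (π : S → ℝ) (ξ η : S → ℤ) (hπ0 : ∀ ω, 0 < π ω)
    (p d : ℝ × ℝ) :
    (∑ ω : S, (d.1 * (ξ ω : ℝ) + d.2 * (η ω : ℝ)) • Dgibbs π ξ η p ω) d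
      = dot (Nmap π ξ η p d) d := by
  simp only [ContinuousLinearMap.coe_sum', Finset.sum_apply, ContinuousLinearMap.coe_smul',
    Pi.smul_apply, smul_eq_mul]
  have hterm : ∀ ω : S, (d.1 * (ξ ω : ℝ) + d.2 * (η ω : ℝ)) * Dgibbs π ξ η p ω d
      = gibbsMeasure π ξ η p.1 p.2 ω * (d.1 * (ξ ω : ℝ) + d.2 * (η ω : ℝ))
          * (d.1 * (ξ ω : ℝ) + d.2 * (η ω : ℝ))
        - (gibbsMeasure π ξ η p.1 p.2 ω * (d.1 * (ξ ω : ℝ) + d.2 * (η ω : ℝ)))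
          * meanChi π ξ η p d := by
    intro ω
    rw [Dgibbs_apply π ξ η hπ0]
    ring
  rw [Finset.sum_congr rfl fun ω _ => hterm ω, Finset.sum_sub_distrib, ← Finset.sum_mul]
  rw [dotN π ξ η hπ0]
  rw [show (∑ ω : S, gibbsMeasure π ξ η p.1 p.2 ω * (d.1 * (ξ ω : ℝ) + d.2 * (η ω : ℝ)))
    = meanChi π ξ η p d from rfl]
  all_goals ring

lemma legendre_max [Nonempty S] (π : S → ℝ) (ξ η : S → ℤ) (hπ0 : ∀ ω, 0 < π ω)
    (p q : ℝ × ℝ) :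
    dot (densityMap π ξ η p) q - freeEnergy π ξ η q
      ≤ dot (densityMap π ξ η p) p - freeEnergy π ξ η p := by
  set w := densityMap π ξ η p with hw
  set d := q - p with hd
  set φ : ℝ → ℝ × ℝ := fun t => p + t • d with hφ
  have hφd : ∀ t : ℝ, HasDerivAt φ d t := by
    intro t
    have h1 : HasDerivAt (fun t : ℝ => t • d) ((1:ℝ) • d) t := (hasDerivAt_id t).smul_const d
    simpa only [one_smul] using h1.const_add p
  have hm : ∀ t : ℝ, HasDerivAt (fun s => meanChi π ξ η (φ s) d) (dot (Nmap π ξ η (φ t) d) d) t := by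
    intro t
    have h2 := (hasFDerivAt_meanChi π ξ η hπ0 (φ t) d).comp_hasDerivAt t (hφd t)
    rw [meanChi_deriv_value π ξ η hπ0] at h2
    exact h2
  have hG : ∀ t : ℝ, HasDerivAt (fun s => freeEnergy π ξ η (φ s)) (meanChi π ξ η (φ t) d) t := by
    intro t
    have h2 := (hasFDerivAt_freeEnergy π ξ η hπ0 (φ t)).comp_hasDerivAt t (hφd t)
    have h3 : ((Zf π ξ η (φ t))⁻¹ • DZ π ξ η (φ t)) d = meanChi π ξ η (φ t) d := by
      rw [ContinuousLinearMap.smul_apply, smul_eq_mul, invZ_DZ π ξ η hπ0]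
    rwa [h3] at h2
  set h : ℝ → ℝ := fun t => (dot w p + t * dot w d) - freeEnergy π ξ η (φ t) with hh
  have hhd : ∀ t : ℝ, HasDerivAt h (dot w d - meanChi π ξ η (φ t) d) t := by
    intro t
    have h1 : HasDerivAt (fun t : ℝ => dot w p + t * dot w d) (dot w d) t := by
      simpa using ((hasDerivAt_id t).mul_const (dot w d)).const_add (dot w p)
    exact h1.sub (hG t)
  have hm0 : meanChi π ξ η (φ 0) d = dot w d := by
    have hφ0 : φ 0 = p := by simp [hφ]
    rw [hφ0, meanChi_dot π ξ η, ← hw]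
  have hmono : Monotone (fun s => meanChi π ξ η (φ s) d) := by
    apply monotone_of_deriv_nonneg
    · exact fun t => (hm t).differentiableAt
    · intro t
      rw [(hm t).deriv]
      exact dotN_self_nonneg π ξ η hπ0 (φ t) d
  have hanti : AntitoneOn h (Set.Icc (0:ℝ) 1) := by
    apply antitoneOn_of_deriv_nonpos (convex_Icc 0 1)
    · exact Continuous.continuousOn (by
        have : Differentiable ℝ h := fun t => (hhd t).differentiableAt
        exact this.continuous)
    · exact fun x _ => ((hhd x).differentiableAt).differentiableWithinAt
    · intro x hx
      rw [interior_Icc] at hx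
      rw [(hhd x).deriv]
      have h9 : meanChi π ξ η (φ 0) d ≤ meanChi π ξ η (φ x) d := hmono (le_of_lt hx.1)
      rw [hm0] at h9
      linarith
  have h10 : h 1 ≤ h 0 := hanti (Set.mem_Icc.mpr ⟨le_refl 0, zero_le_one⟩)
    (Set.mem_Icc.mpr ⟨zero_le_one, le_refl 1⟩) zero_le_one
  have hφ0 : φ 0 = p := by simp [hφ]
  have hφ1 : φ 1 = q := by simp [hφ, hd]
  have hdot : dot w p + 1 * dot w d = dot w q := by
    simp only [dot, hd, Prod.fst_sub, Prod.snd_sub]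
    ring
  have h1v : h 1 = dot w q - freeEnergy π ξ η q := by rw [hh]; simp only [hφ1]; rw [← hdot]
  have h0v : h 0 = dot w p - freeEnergy π ξ η p := by rw [hh]; simp only [hφ0]; ring_nf
  rw [← h1v, ← h0v]
  exact h10

lemma thermo_bdd [Nonempty S] (π : S → ℝ) (ξ η : S → ℤ) (hπ0 : ∀ ω, 0 < π ω) (p : ℝ × ℝ) :
    BddAbove (Set.range fun q : ℝ × ℝ =>
      (densityMap π ξ η p).1 * q.1 + (densityMap π ξ η p).2 * q.2 - freeEnergy π ξ η q) := by
  refine ⟨dot (densityMap π ξ η p) p - freeEnergy π ξ η p, ?_⟩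
  rintro x ⟨q, rfl⟩
  have := legendre_max π ξ η hπ0 p q
  simpa [dot] using this

lemma thermo_at [Nonempty S] (π : S → ℝ) (ξ η : S → ℤ) (hπ0 : ∀ ω, 0 < π ω) (p : ℝ × ℝ) :
    thermoEntropy π ξ η (densityMap π ξ η p)
      = dot (densityMap π ξ η p) p - freeEnergy π ξ η p := by
  apply le_antisymm
  · apply ciSup_le
    intro q
    have := legendre_max π ξ η hπ0 p q
    simpa [dot] using this
  · have := le_ciSup (thermo_bdd π ξ η hπ0 p) p
    simpa [dot, thermoEntropy] using this

lemma thermo_lb [Nonempty S] (π : S → ℝ) (ξ η : S → ℤ) (hπ0 : ∀ ω, 0 < π ω) (p' p : ℝ × ℝ) :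
    dot (densityMap π ξ η p') p - freeEnergy π ξ η p
      ≤ thermoEntropy π ξ η (densityMap π ξ η p') := by
  have := le_ciSup (thermo_bdd π ξ η hπ0 p') p
  simpa [dot, thermoEntropy] using this

noncomputable def Lp (p : ℝ × ℝ) : (ℝ × ℝ) →L[ℝ] ℝ :=
  p.1 • ContinuousLinearMap.fst ℝ ℝ ℝ + p.2 • ContinuousLinearMap.snd ℝ ℝ ℝ

@[simp] lemma Lp_apply (p w : ℝ × ℝ) : Lp p w = w.1 * p.1 + w.2 * p.2 := by
  simp [Lp, mul_comm]

lemma grad_thermo [Nonempty S] (π : S → ℝ) (ξ η : S → ℤ) (hπ0 : ∀ ω, 0 < π ω)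
    (hli : LinearIndependent ℝ
      ![fun ω : S => (ξ ω : ℝ), fun ω : S => (η ω : ℝ), fun _ : S => (1 : ℝ)])
    (hS1 : ∀ w ∈ Set.range (densityMap π ξ η),
      DifferentiableAt ℝ (thermoEntropy π ξ η) w)
    (p : ℝ × ℝ) :
    fderiv ℝ (thermoEntropy π ξ η) (densityMap π ξ η p) = Lp p := by
  set w0 := densityMap π ξ η p with hw0
  have hmem : w0 ∈ Set.range (densityMap π ξ η) := ⟨p, rfl⟩
  have hmin : IsLocalMin (fun w => thermoEntropy π ξ η w - dot w p) w0 := by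
    refine Filter.eventually_of_mem (range_mem_nhds π ξ η hπ0 hli p) ?_
    rintro x ⟨p', rfl⟩
    have h1 : thermoEntropy π ξ η w0 - dot w0 p
        = - freeEnergy π ξ η p := by
      rw [hw0, thermo_at π ξ η hπ0 p]
      ring
    have h2 := thermo_lb π ξ η hπ0 p' p
    simp only [h1]
    linarith
  have hdotF : HasFDerivAt (fun w : ℝ × ℝ => dot w p) (Lp p) w0 := by
    have heq : (fun w : ℝ × ℝ => dot w p) = ⇑(Lp p) := by
      funext w
      simp [dot]
    rw [heq]
    exact (Lp p).hasFDerivAt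
  have hF : HasFDerivAt (fun w => thermoEntropy π ξ η w - dot w p)
      (fderiv ℝ (thermoEntropy π ξ η) w0 - Lp p) w0 :=
    ((hS1 w0 hmem).hasFDerivAt).sub hdotF
  have h0 := hmin.fderiv_eq_zero
  rw [hF.fderiv] at h0
  have := sub_eq_zero.mp h0
  exact this

lemma gibbs_rev [Nonempty S] (r : S → S → S → S → ℝ) (π : S → ℝ) (ξ η : S → ℤ)
    (hr : ∀ a b c d : S, 0 ≤ r a b c d)
    (hA : ∀ a b c d : S, 0 < r a b c d →
      ξ a + ξ b = ξ c + ξ d ∧ η a + η b = η c + η d)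
    (hπ0 : ∀ ω, 0 < π ω)
    (hC : ∀ a b c d : S, π a * π b * r a b c d = π d * π c * r d c b a)
    (p : ℝ × ℝ) :
    ∀ a b c d : S,
      gibbsMeasure π ξ η p.1 p.2 a * gibbsMeasure π ξ η p.1 p.2 b * r a b c d
        = gibbsMeasure π ξ η p.1 p.2 d * gibbsMeasure π ξ η p.1 p.2 c * r d c b a := by
  intro a b c d
  rcases (hr a b c d).lt_or_eq with hp | hp
  · obtain ⟨h1, h2⟩ := hA a b c d hp
    have h1' : (ξ a : ℝ) + (ξ b : ℝ) = (ξ c : ℝ) + (ξ d : ℝ) := by exact_mod_cast h1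
    have h2' : (η a : ℝ) + (η b : ℝ) = (η c : ℝ) + (η d : ℝ) := by exact_mod_cast h2
    have hz : Zf π ξ η p ≠ 0 := (Zf_pos π ξ η hπ0 p).ne'
    have he : Real.exp (p.1 * (ξ a : ℝ) + p.2 * (η a : ℝ))
          * Real.exp (p.1 * (ξ b : ℝ) + p.2 * (η b : ℝ))
        = Real.exp (p.1 * (ξ d : ℝ) + p.2 * (η d : ℝ))
          * Real.exp (p.1 * (ξ c : ℝ) + p.2 * (η c : ℝ)) := by
      rw [← Real.exp_add, ← Real.exp_add]
      congr 1
      linear_combination p.1 * h1' + p.2 * h2'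
    have key : (Real.exp (p.1 * (ξ a : ℝ) + p.2 * (η a : ℝ)) * π a)
          * (Real.exp (p.1 * (ξ b : ℝ) + p.2 * (η b : ℝ)) * π b) * r a b c d
        = (Real.exp (p.1 * (ξ d : ℝ) + p.2 * (η d : ℝ)) * π d)
          * (Real.exp (p.1 * (ξ c : ℝ) + p.2 * (η c : ℝ)) * π c) * r d c b a := by
      have hCC := hC a b c d
      calc (Real.exp (p.1 * (ξ a : ℝ) + p.2 * (η a : ℝ)) * π a)
            * (Real.exp (p.1 * (ξ b : ℝ) + p.2 * (η b : ℝ)) * π b) * r a b c d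
          = (Real.exp (p.1 * (ξ a : ℝ) + p.2 * (η a : ℝ))
              * Real.exp (p.1 * (ξ b : ℝ) + p.2 * (η b : ℝ)))
            * (π a * π b * r a b c d) := by ring
        _ = (Real.exp (p.1 * (ξ d : ℝ) + p.2 * (η d : ℝ))
              * Real.exp (p.1 * (ξ c : ℝ) + p.2 * (η c : ℝ)))
            * (π d * π c * r d c b a) := by rw [he, hCC]
        _ = (Real.exp (p.1 * (ξ d : ℝ) + p.2 * (η d : ℝ)) * π d)
            * (Real.exp (p.1 * (ξ c : ℝ) + p.2 * (η c : ℝ)) * π c) * r d c b a := by ring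
    rw [gibbs_eq π ξ η hπ0, gibbs_eq π ξ η hπ0, gibbs_eq π ξ η hπ0, gibbs_eq π ξ η hπ0]
    field_simp
    linear_combination key
  · have hCC := hC a b c d
    rw [← hp, mul_zero] at hCC
    have hr2 : r d c b a = 0 := by
      by_contra hne
      have : π d * π c * r d c b a ≠ 0 :=
        mul_ne_zero (mul_ne_zero (hπ0 d).ne' (hπ0 c).ne') hne
      exact this hCC.symm
    rw [← hp, hr2]
    ring

lemma flux_symm [Nonempty S] (r : S → S → S → S → ℝ) (π : S → ℝ) (ξ η : S → ℤ)
    (hr : ∀ a b c d : S, 0 ≤ r a b c d)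
    (hA : ∀ a b c d : S, 0 < r a b c d →
      ξ a + ξ b = ξ c + ξ d ∧ η a + η b = η c + η d)
    (hπ0 : ∀ ω, 0 < π ω)
    (hC : ∀ a b c d : S, π a * π b * r a b c d = π d * π c * r d c b a)
    (hD : ∀ a b e : S,
      (∑ c : S, ∑ d : S, r a b c d) + (∑ c : S, ∑ d : S, r b e c d)
          + (∑ c : S, ∑ d : S, r e a c d)
        = (∑ c : S, ∑ d : S, r a e c d) + (∑ c : S, ∑ d : S, r e b c d)
          + (∑ c : S, ∑ d : S, r b a c d))
    (p : ℝ × ℝ) :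
    DM r π ξ η ξ p (0, 1) = DM r π ξ η η p (1, 0) := by
  set ρ : S → ℝ := fun ω => gibbsMeasure π ξ η p.1 p.2 ω with hρ
  set mxi : ℝ := meanChi π ξ η p (1, 0) with hmxi
  set mEta : ℝ := meanChi π ξ η p (0, 1) with hmeta
  set f : S → ℝ := fun ω => (η ω : ℝ) - mEta with hf
  set g : S → ℝ := fun ω => (ξ ω : ℝ) - mxi with hg
  have hC' : ∀ a b c d : S, ρ a * ρ b * r a b c d = ρ d * ρ c * r d c b a :=
    gibbs_rev r π ξ η hr hA hπ0 hC p
  have hconsf : ∀ a b c d : S, 0 < r a b c d → f a + f b = f c + f d := by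
    intro a b c d hp
    have h2 := (hA a b c d hp).2
    have h2' : (η a : ℝ) + (η b : ℝ) = (η c : ℝ) + (η d : ℝ) := by exact_mod_cast h2
    simp only [hf]
    linarith
  have hconsg : ∀ a b c d : S, 0 < r a b c d → g a + g b = g c + g d := by
    intro a b c d hp
    have h1 := (hA a b c d hp).1
    have h1' : (ξ a : ℝ) + (ξ b : ℝ) = (ξ c : ℝ) + (ξ d : ℝ) := by exact_mod_cast h1
    simp only [hg]
    linarith
  have hmf : ∑ ω : S, f ω * ρ ω = 0 := by
    simp only [hf, hρ]
    rw [Finset.sum_congr rfl (fun ω _ => by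
      show ((η ω : ℝ) - mEta) * gibbsMeasure π ξ η p.1 p.2 ω
        = gibbsMeasure π ξ η p.1 p.2 ω * ((0:ℝ) * (ξ ω : ℝ) + 1 * (η ω : ℝ))
          - mEta * gibbsMeasure π ξ η p.1 p.2 ω
      ring)]
    rw [Finset.sum_sub_distrib, ← Finset.mul_sum, gibbs_sum π ξ η hπ0]
    rw [show (∑ ω : S, gibbsMeasure π ξ η p.1 p.2 ω * ((0:ℝ) * (ξ ω : ℝ) + 1 * (η ω : ℝ)))
      = meanChi π ξ η p (0, 1) from rfl]
    simp [hmeta]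
  have hmg : ∑ ω : S, g ω * ρ ω = 0 := by
    simp only [hg, hρ]
    rw [Finset.sum_congr rfl (fun ω _ => by
      show ((ξ ω : ℝ) - mxi) * gibbsMeasure π ξ η p.1 p.2 ω
        = gibbsMeasure π ξ η p.1 p.2 ω * ((1:ℝ) * (ξ ω : ℝ) + 0 * (η ω : ℝ))
          - mxi * gibbsMeasure π ξ η p.1 p.2 ω
      ring)]
    rw [Finset.sum_sub_distrib, ← Finset.mul_sum, gibbs_sum π ξ η hπ0]
    rw [show (∑ ω : S, gibbsMeasure π ξ η p.1 p.2 ω * ((1:ℝ) * (ξ ω : ℝ) + 0 * (η ω : ℝ)))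
      = meanChi π ξ η p (1, 0) from rfl]
    simp [hmxi]
  have hDMxi : DM r π ξ η ξ p (0, 1)
      = Q r ρ (fun a b _ d => (g d - g b) * (f a + f b)) := by
    rw [DM_apply r π ξ η ξ hπ0, Q]
    refine Finset.sum_congr rfl fun a _ => Finset.sum_congr rfl fun b _ => ?_
    simp only [Finset.sum_mul]
    refine Finset.sum_congr rfl fun c _ => Finset.sum_congr rfl fun e _ => ?_
    simp only [hf, hg, hρ, ← hmeta]
    ring
  have hDMeta : DM r π ξ η η p (1, 0)
      = Q r ρ (fun a b _ d => (f d - f b) * (g a + g b)) := by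
    rw [DM_apply r π ξ η η hπ0, Q]
    refine Finset.sum_congr rfl fun a _ => Finset.sum_congr rfl fun b _ => ?_
    simp only [Finset.sum_mul]
    refine Finset.sum_congr rfl fun c _ => Finset.sum_congr rfl fun e _ => ?_
    simp only [hf, hg, hρ, ← hmxi]
    ring
  rw [hDMxi, hDMeta]
  exact core_symm r ρ f g hr hC' hconsf hconsg hD hmf hmg

end LaxAux

/-- the thermodynamic entropy `S*` is a Lax entropy of the
hydrodynamic system: `S*''_{uu} ∂_v Φ̃ + S*''_{uv} ∂_v Ψ̃ =
S*''_{uv} ∂_u Φ̃ + S*''_{vv} ∂_u Ψ̃` on the range of `∇G`. -/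
theorem thermo_entropy_is_lax_entropy {S : Type*} [Fintype S]
    (ξ η : S → ℤ) (r : S → S → S → S → ℝ) (π : S → ℝ)
    (hr : ∀ ω₁ ω₂ ω₁' ω₂' : S, 0 ≤ r ω₁ ω₂ ω₁' ω₂')
    (hA : ∀ ω₁ ω₂ ω₁' ω₂' : S, 0 < r ω₁ ω₂ ω₁' ω₂' →
      ξ ω₁ + ξ ω₂ = ξ ω₁' + ξ ω₂' ∧ η ω₁ + η ω₂ = η ω₁' + η ω₂')
    (hπ0 : ∀ ω : S, 0 < π ω) (hπ1 : ∑ ω : S, π ω = 1)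
    (hC : ∀ ω₁ ω₂ ω₁' ω₂' : S,
      π ω₁ * π ω₂ * r ω₁ ω₂ ω₁' ω₂' = π ω₂' * π ω₁' * r ω₂' ω₁' ω₂ ω₁)
    (hD : ∀ ω₁ ω₂ ω₃ : S,
      (∑ ω₁' : S, ∑ ω₂' : S, r ω₁ ω₂ ω₁' ω₂')
        + (∑ ω₁' : S, ∑ ω₂' : S, r ω₂ ω₃ ω₁' ω₂')
        + (∑ ω₁' : S, ∑ ω₂' : S, r ω₃ ω₁ ω₁' ω₂')
      = (∑ ω₁' : S, ∑ ω₂' : S, r ω₁ ω₃ ω₁' ω₂')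
        + (∑ ω₁' : S, ∑ ω₂' : S, r ω₃ ω₂ ω₁' ω₂')
        + (∑ ω₁' : S, ∑ ω₂' : S, r ω₂ ω₁ ω₁' ω₂'))
    (hli : LinearIndependent ℝ
      ![fun ω : S => (ξ ω : ℝ), fun ω : S => (η ω : ℝ), fun _ : S => (1 : ℝ)])
    (V : Set (ℝ × ℝ)) (hV : IsOpen V)
    (hrange : Set.range (densityMap π ξ η) ⊆ V)
    (Φt Ψt : ℝ × ℝ → ℝ)
    (hΦd : ∀ w ∈ V, DifferentiableAt ℝ Φt w)
    (hΨd : ∀ w ∈ V, DifferentiableAt ℝ Ψt w)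
    (hΦ : ∀ p : ℝ × ℝ, Φt (densityMap π ξ η p) = macroFlux r π ξ η ξ p)
    (hΨ : ∀ p : ℝ × ℝ, Ψt (densityMap π ξ η p) = macroFlux r π ξ η η p)
    (hS1 : ∀ w ∈ Set.range (densityMap π ξ η),
      DifferentiableAt ℝ (thermoEntropy π ξ η) w)
    (hS2 : ∀ w ∈ Set.range (densityMap π ξ η), ∀ d : ℝ × ℝ,
      DifferentiableAt ℝ (fun w' => fderiv ℝ (thermoEntropy π ξ η) w' d) w) :
    ∀ w ∈ Set.range (densityMap π ξ η),
      fderiv ℝ (fun w' => fderiv ℝ (thermoEntropy π ξ η) w' (1, 0)) w (1, 0) *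
          fderiv ℝ Φt w (0, 1)
        + fderiv ℝ (fun w' => fderiv ℝ (thermoEntropy π ξ η) w' (1, 0)) w (0, 1) *
          fderiv ℝ Ψt w (0, 1)
      = fderiv ℝ (fun w' => fderiv ℝ (thermoEntropy π ξ η) w' (1, 0)) w (0, 1) *
          fderiv ℝ Φt w (1, 0)
        + fderiv ℝ (fun w' => fderiv ℝ (thermoEntropy π ξ η) w' (0, 1)) w (0, 1) *
          fderiv ℝ Ψt w (1, 0) := by
    classical
  have hne : Nonempty S := LaxAux.nonempty_of_li ξ η hli
  intro w hw
  obtain ⟨p₀, rfl⟩ := hw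
  obtain ⟨d1, hd1⟩ := (LaxAux.Nmap_surj π ξ η hπ0 hli p₀).2 (1, 0)
  obtain ⟨d2, hd2⟩ := (LaxAux.Nmap_surj π ξ η hπ0 hli p₀).2 (0, 1)
  -- second-derivative identities from Legendre duality
  have key1 : ∀ d : ℝ × ℝ,
      fderiv ℝ (fun w' => fderiv ℝ (thermoEntropy π ξ η) w' (1, 0)) (densityMap π ξ η p₀)
        (LaxAux.Nmap π ξ η p₀ d) = d.1 := by
    intro d
    have hu : (fun p' : ℝ × ℝ => fderiv ℝ (thermoEntropy π ξ η) (densityMap π ξ η p') (1, 0))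
        = fun p' : ℝ × ℝ => p'.1 := by
      funext p'
      rw [LaxAux.grad_thermo π ξ η hπ0 hli hS1 p']
      simp
    have hcomp : HasFDerivAt
        (fun p' : ℝ × ℝ => fderiv ℝ (thermoEntropy π ξ η) (densityMap π ξ η p') (1, 0))
        ((fderiv ℝ (fun w' => fderiv ℝ (thermoEntropy π ξ η) w' (1, 0))
            (densityMap π ξ η p₀)).comp (LaxAux.Nmap π ξ η p₀)) p₀ :=
      HasFDerivAt.comp p₀ (hS2 _ ⟨p₀, rfl⟩ (1, 0)).hasFDerivAt
        (LaxAux.hasFDerivAt_densityMap π ξ η hπ0 p₀)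
    rw [hu] at hcomp
    have huniq := hcomp.unique hasFDerivAt_fst
    have hval := congrArg (fun L : (ℝ × ℝ) →L[ℝ] ℝ => L d) huniq
    simpa using hval
  have key2 : ∀ d : ℝ × ℝ,
      fderiv ℝ (fun w' => fderiv ℝ (thermoEntropy π ξ η) w' (0, 1)) (densityMap π ξ η p₀)
        (LaxAux.Nmap π ξ η p₀ d) = d.2 := by
    intro d
    have hu : (fun p' : ℝ × ℝ => fderiv ℝ (thermoEntropy π ξ η) (densityMap π ξ η p') (0, 1))
        = fun p' : ℝ × ℝ => p'.2 := by
      funext p'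
      rw [LaxAux.grad_thermo π ξ η hπ0 hli hS1 p']
      simp
    have hcomp : HasFDerivAt
        (fun p' : ℝ × ℝ => fderiv ℝ (thermoEntropy π ξ η) (densityMap π ξ η p') (0, 1))
        ((fderiv ℝ (fun w' => fderiv ℝ (thermoEntropy π ξ η) w' (0, 1))
            (densityMap π ξ η p₀)).comp (LaxAux.Nmap π ξ η p₀)) p₀ :=
      HasFDerivAt.comp p₀ (hS2 _ ⟨p₀, rfl⟩ (0, 1)).hasFDerivAt
        (LaxAux.hasFDerivAt_densityMap π ξ η hπ0 p₀)
    rw [hu] at hcomp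
    have huniq := hcomp.unique hasFDerivAt_snd
    have hval := congrArg (fun L : (ℝ × ℝ) →L[ℝ] ℝ => L d) huniq
    simpa using hval
  -- flux composition identities
  have keyF : ∀ d : ℝ × ℝ,
      fderiv ℝ Φt (densityMap π ξ η p₀) (LaxAux.Nmap π ξ η p₀ d)
        = LaxAux.DM r π ξ η ξ p₀ d := by
    intro d
    have hu : (fun p' : ℝ × ℝ => Φt (densityMap π ξ η p')) = macroFlux r π ξ η ξ := funext hΦ
    have hcomp : HasFDerivAt (fun p' : ℝ × ℝ => Φt (densityMap π ξ η p'))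
        ((fderiv ℝ Φt (densityMap π ξ η p₀)).comp (LaxAux.Nmap π ξ η p₀)) p₀ :=
      HasFDerivAt.comp p₀ ((hΦd _ (hrange ⟨p₀, rfl⟩)).hasFDerivAt)
        (LaxAux.hasFDerivAt_densityMap π ξ η hπ0 p₀)
    rw [hu] at hcomp
    have huniq := hcomp.unique (LaxAux.hasFDerivAt_macroFlux r π ξ η ξ hπ0 p₀)
    have hval := congrArg (fun L : (ℝ × ℝ) →L[ℝ] ℝ => L d) huniq
    simpa using hval
  have keyG : ∀ d : ℝ × ℝ,
      fderiv ℝ Ψt (densityMap π ξ η p₀) (LaxAux.Nmap π ξ η p₀ d)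
        = LaxAux.DM r π ξ η η p₀ d := by
    intro d
    have hu : (fun p' : ℝ × ℝ => Ψt (densityMap π ξ η p')) = macroFlux r π ξ η η := funext hΨ
    have hcomp : HasFDerivAt (fun p' : ℝ × ℝ => Ψt (densityMap π ξ η p'))
        ((fderiv ℝ Ψt (densityMap π ξ η p₀)).comp (LaxAux.Nmap π ξ η p₀)) p₀ :=
      HasFDerivAt.comp p₀ ((hΨd _ (hrange ⟨p₀, rfl⟩)).hasFDerivAt)
        (LaxAux.hasFDerivAt_densityMap π ξ η hπ0 p₀)
    rw [hu] at hcomp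
    have huniq := hcomp.unique (LaxAux.hasFDerivAt_macroFlux r π ξ η η hπ0 p₀)
    have hval := congrArg (fun L : (ℝ × ℝ) →L[ℝ] ℝ => L d) huniq
    simpa using hval
  -- evaluate all six terms
  have e1 : fderiv ℝ (fun w' => fderiv ℝ (thermoEntropy π ξ η) w' (1, 0))
      (densityMap π ξ η p₀) (1, 0) = d1.1 := by
    have h := key1 d1; rw [hd1] at h; exact h
  have e2 : fderiv ℝ (fun w' => fderiv ℝ (thermoEntropy π ξ η) w' (1, 0))
      (densityMap π ξ η p₀) (0, 1) = d2.1 := by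
    have h := key1 d2; rw [hd2] at h; exact h
  have e3 : fderiv ℝ (fun w' => fderiv ℝ (thermoEntropy π ξ η) w' (0, 1))
      (densityMap π ξ η p₀) (0, 1) = d2.2 := by
    have h := key2 d2; rw [hd2] at h; exact h
  have f1 : fderiv ℝ Φt (densityMap π ξ η p₀) (0, 1) = LaxAux.DM r π ξ η ξ p₀ d2 := by
    have h := keyF d2; rw [hd2] at h; exact h
  have f2 : fderiv ℝ Φt (densityMap π ξ η p₀) (1, 0) = LaxAux.DM r π ξ η ξ p₀ d1 := by
    have h := keyF d1; rw [hd1] at h; exact h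
  have f3 : fderiv ℝ Ψt (densityMap π ξ η p₀) (0, 1) = LaxAux.DM r π ξ η η p₀ d2 := by
    have h := keyG d2; rw [hd2] at h; exact h
  have f4 : fderiv ℝ Ψt (densityMap π ξ η p₀) (1, 0) = LaxAux.DM r π ξ η η p₀ d1 := by
    have h := keyG d1; rw [hd1] at h; exact h
  rw [e1, e2, e3, f1, f2, f3, f4]
  -- symmetry of the covariance matrix
  have hKsym : d1.2 = d2.1 := by
    have h := LaxAux.dotN_symm π ξ η hπ0 p₀ d1 d2
    rw [hd1, hd2] at h
    exact (by simpa [LaxAux.dot] using h : d2.1 = d1.2).symm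
  -- the Onsager flux symmetry
  have hMsym : LaxAux.DM r π ξ η ξ p₀ (0, 1) = LaxAux.DM r π ξ η η p₀ (1, 0) :=
    LaxAux.flux_symm r π ξ η hr hA hπ0 hC hD p₀
  -- linearity of DM
  have hlin : ∀ (gq : S → ℤ) (d : ℝ × ℝ), LaxAux.DM r π ξ η gq p₀ d
      = d.1 * LaxAux.DM r π ξ η gq p₀ (1, 0) + d.2 * LaxAux.DM r π ξ η gq p₀ (0, 1) := by
    intro gq d
    have hdd : d = d.1 • ((1:ℝ), (0:ℝ)) + d.2 • ((0:ℝ), (1:ℝ)) := by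
      ext <;> simp
    conv_lhs => rw [hdd]
    rw [map_add, map_smul, map_smul]
    simp [smul_eq_mul]
  rw [hlin ξ d1, hlin ξ d2, hlin η d1, hlin η d2, hKsym]
  linear_combination (d1.1 * d2.2 - d2.1 * d2.1) * hMsym
end
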